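/- arXiv:2205.15877 — 2 statements merged into one kernel-verified Lean document; each statement's English description precedes it below -/
import Mathlib

section
/- Let q be a prime power and w = (w_0,...,w_n) a tuple of positive integers. Let K be any field extension of F_q and x = (x_0,...,x_n) a nonzero vector in K^{n+1}. Let v be the sub-tuple of w consisting of those weights w_i for which x_i ≠ 0. Then the stabilizer of x in F_q^× under the weighted action λ ∗ x = (λ^{w_0} x_0, ..., λ^{w_n} x_n) has cardinality gcd(v, q-1), where gcd(v, q-1) denotes the gcd of the entries of v together with q-1. -/
/-! λ fixes `x` exactly when `λ ^ wᵢ = 1` for every `i` in the support of `x`, i.e. when the order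
of `λ` divides the gcd of those weights. In the cyclic group `F_qˣ` of order `q - 1`, the kernel of
`λ ↦ λ ^ k` has `gcd(k, q - 1)` elements. -/

open scoped Classical

theorem pow_finset_gcd_eq_one_iff {M ι : Type*} [Monoid M] (g : M) (s : Finset ι) (f : ι → ℕ) :
    g ^ s.gcd f = 1 ↔ ∀ i ∈ s, g ^ f i = 1 := by
  simp only [← orderOf_dvd_iff_pow_eq_one, Finset.dvd_gcd_iff]

theorem forall_pow_mul_eq_self_iff {M₀ ι : Type*} [MonoidWithZero M₀] [IsRightCancelMulZero M₀]
    (c : M₀) (w : ι → ℕ) (x : ι → M₀) :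
    (∀ i, c ^ w i * x i = x i) ↔ ∀ i, x i ≠ 0 → c ^ w i = 1 := by
  refine forall_congr' fun i => ⟨fun h hxi => ?_, fun h => ?_⟩
  · exact mul_right_cancel₀ hxi (h.trans (one_mul _).symm)
  · by_cases hxi : x i = 0
    · rw [hxi, mul_zero]
    · rw [h hxi, one_mul]

theorem IsCyclic.card_pow_eq_one {G : Type*} [CommGroup G] [IsCyclic G] [Finite G] (k : ℕ) :
    Nat.card {g : G // g ^ k = 1} = (Nat.card G).gcd k :=
  (Nat.card_congr (Equiv.subtypeEquivRight fun _ => MonoidHom.mem_ker)).trans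
    (IsCyclic.card_powMonoidHom_ker G k)

theorem Units.algebraMap_pow_eq_one_iff {F K : Type*} [Field F] [Semiring K] [Nontrivial K]
    [Algebra F K] (u : Fˣ) (k : ℕ) : algebraMap F K u ^ k = 1 ↔ u ^ k = 1 := by
  rw [← map_pow, (algebraMap F K).injective.eq_iff' (map_one _), ← Units.val_pow_eq_pow_val,
    Units.val_eq_one]

theorem stmt_1_general (q : ℕ) (Fq : Type*) [Field Fq] [Fintype Fq]
    (hcard : Fintype.card Fq = q) (K : Type*) [Field K] [Algebra Fq K]
    (n : ℕ) (w : Fin (n + 1) → ℕ)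
    (x : Fin (n + 1) → K) :
    Nat.card {lam : Fqˣ // ∀ i, (algebraMap Fq K (lam : Fq)) ^ (w i) * x i = x i} =
      Nat.gcd ((Finset.univ.filter fun i => x i ≠ 0).gcd w) (q - 1) := by
  set S := Finset.univ.filter fun i => x i ≠ 0
  have stabilizer_iff (lam : Fqˣ) :
      (∀ i, (algebraMap Fq K (lam : Fq)) ^ (w i) * x i = x i) ↔ lam ^ S.gcd w = 1 := by
    simp only [forall_pow_mul_eq_self_iff, Units.algebraMap_pow_eq_one_iff,
      pow_finset_gcd_eq_one_iff, S, Finset.mem_filter, Finset.mem_univ, true_and]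
  calc Nat.card {lam : Fqˣ // ∀ i, (algebraMap Fq K (lam : Fq)) ^ (w i) * x i = x i}
      = Nat.card {lam : Fqˣ // lam ^ S.gcd w = 1} :=
        Nat.card_congr (Equiv.subtypeEquivRight stabilizer_iff)
    _ = (Nat.card Fqˣ).gcd (S.gcd w) := IsCyclic.card_pow_eq_one _
    _ = (S.gcd w).gcd (q - 1) := by
        rw [Nat.card_eq_fintype_card, Fintype.card_units, hcard, Nat.gcd_comm]

/-- Let `Fq` be a finite field with `q` elements, `K` a field extension of `Fq`,
`w = (w₀, …, wₙ)` a tuple of positive integers, and `x ∈ K^{n+1}` nonzero.  The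
stabilizer of `x` in `Fqˣ` under the weighted action
`λ ∗ x = (λ^{w₀} x₀, …, λ^{wₙ} xₙ)` has cardinality `gcd(v, q - 1)`, where `v`
is the sub-tuple of `w` of weights at indices where `x i ≠ 0`. -/
theorem stmt_1 (q : ℕ) (hq : IsPrimePow q) (Fq : Type*) [Field Fq] [Fintype Fq]
    (hcard : Fintype.card Fq = q) (K : Type*) [Field K] [Algebra Fq K]
    (n : ℕ) (w : Fin (n + 1) → ℕ) (hw : ∀ i, 0 < w i)
    (x : Fin (n + 1) → K) (hx : x ≠ 0) :
    Nat.card {lam : Fqˣ // ∀ i, (algebraMap Fq K (lam : Fq)) ^ (w i) * x i = x i} =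
      Nat.gcd ((Finset.univ.filter fun i => x i ≠ 0).gcd w) (q - 1) :=
  stmt_1_general q Fq hcard K n w x
end

section
/- Let q be a prime power, w = (w_0,...,w_n) a tuple of positive integers, and K a field extension of F_q. Under the weighted action of F_q^× on K^{n+1} \ {0} given by λ ∗ (x_0,...,x_n) = (λ^{w_0}x_0,...,λ^{w_n}x_n), the orbit of any nonzero vector x whose nonzero coordinates correspond to the sub-tuple v of w has exactly (q-1)/gcd(v, q-1) elements. -/
open scoped Classical

lemma aux_card_pow {G : Type*} [CommGroup G] [Fintype G] [IsCyclic G]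
    {d : ℕ} (hd : 0 < d) :
    Nat.card {a : G // a ^ d = 1} = Nat.gcd d (Fintype.card G) := by
  classical
  set N := Fintype.card G with hN
  set g := Nat.gcd d N with hg
  have hgN : g ∣ N := Nat.gcd_dvd_right d N
  have hgd : g ∣ d := Nat.gcd_dvd_left d N
  have hNpos : 0 < N := Fintype.card_pos
  have hgpos : 0 < g := Nat.gcd_pos_of_pos_left N hd
  have hset : ∀ a : G, a ^ d = 1 ↔ a ^ g = 1 := by
    intro a
    constructor
    · intro h
      have h1 : orderOf a ∣ d := orderOf_dvd_of_pow_eq_one h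
      have h2 : orderOf a ∣ N := hN ▸ orderOf_dvd_card
      exact orderOf_dvd_iff_pow_eq_one.mp (Nat.dvd_gcd h1 h2)
    · intro h
      obtain ⟨c, hc⟩ := hgd
      rw [hc, pow_mul, h, one_pow]
  have : Nat.card {a : G // a ^ d = 1} = Finset.card (Finset.univ.filter fun a : G => a ^ g = 1) := by
    rw [Nat.card_eq_fintype_card]
    refine Fintype.card_of_subtype _ fun a => ?_
    simp [hset a]
  rw [this]
  refine le_antisymm (IsCyclic.card_pow_eq_one_le hgpos) ?_
  obtain ⟨z, hz⟩ := IsCyclic.exists_generator (α := G)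
  have hzord : orderOf z = N := ((orderOf_eq_card_of_forall_mem_zpowers hz).trans Nat.card_eq_fintype_card)
  set ζ := z ^ (N / g) with hζ
  have hord : orderOf ζ = g := by
    rw [hζ, orderOf_pow, hzord, Nat.gcd_eq_right (Nat.div_dvd_of_dvd hgN),
      Nat.div_div_self hgN hNpos.ne']
  have hsub : (Subgroup.zpowers ζ : Set G).toFinset ⊆ (Finset.univ.filter fun a : G => a ^ g = 1) := by
    intro a ha
    simp only [Set.mem_toFinset, SetLike.mem_coe, Subgroup.mem_zpowers_iff] at ha
    obtain ⟨k, rfl⟩ := ha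
    simp only [Finset.mem_filter, Finset.mem_univ, true_and]
    have : ζ ^ g = 1 := by rw [← hord]; exact pow_orderOf_eq_one ζ
    rw [← zpow_natCast, ← zpow_mul, mul_comm, zpow_mul, zpow_natCast, this, one_zpow]
  calc g = Finset.card ((Subgroup.zpowers ζ : Set G)).toFinset := by
        simp [← Nat.card_eq_fintype_card, Nat.card_zpowers, hord]
    _ ≤ _ := Finset.card_le_card hsub

/-- Under the weighted action of `Fqˣ` on `K^{n+1} \ {0}` given by
`λ ∗ (x₀, …, xₙ) = (λ^{w₀} x₀, …, λ^{wₙ} xₙ)`, the orbit of a nonzero vector `x`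
whose nonzero coordinates correspond to the sub-tuple `v` of `w` has exactly
`(q - 1) / gcd(v, q - 1)` elements. -/
theorem stmt_2 (q : ℕ) (hq : IsPrimePow q) (Fq : Type*) [Field Fq] [Fintype Fq]
    (hcard : Fintype.card Fq = q) (K : Type*) [Field K] [Algebra Fq K]
    (n : ℕ) (w : Fin (n + 1) → ℕ) (hw : ∀ i, 0 < w i)
    (x : Fin (n + 1) → K) (hx : x ≠ 0) :
    Nat.card {y : Fin (n + 1) → K //
        ∃ lam : Fqˣ, ∀ i, (algebraMap Fq K (lam : Fq)) ^ (w i) * x i = y i} =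
      (q - 1) / Nat.gcd ((Finset.univ.filter fun i => x i ≠ 0).gcd w) (q - 1) := by
  classical
  set S := Finset.univ.filter fun i => x i ≠ 0 with hS
  set d := S.gcd w with hd
  obtain ⟨i0, hi0⟩ : ∃ i, x i ≠ 0 := by
    by_contra h; push_neg at h; exact hx (funext h)
  have hi0S : i0 ∈ S := by simp [hS, hi0]
  have hdpos : 0 < d := by
    rcases Nat.eq_zero_or_pos d with h | h
    · exact absurd (Finset.gcd_eq_zero_iff.mp h i0 hi0S) (hw i0).ne'
    · exact h
  have hinj : Function.Injective (algebraMap Fq K) := (algebraMap Fq K).injective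
  set f : Fqˣ → (Fin (n + 1) → K) :=
    fun lam i => (algebraMap Fq K (lam : Fq)) ^ (w i) * x i with hf
  -- the subtype is the range of f
  have e1 : {y : Fin (n + 1) → K //
      ∃ lam : Fqˣ, ∀ i, (algebraMap Fq K (lam : Fq)) ^ (w i) * x i = y i} ≃ Set.range f :=
    Equiv.subtypeEquivRight (by
      intro y
      constructor
      · rintro ⟨lam, h⟩; exact ⟨lam, funext h⟩
      · rintro ⟨lam, rfl⟩; exact ⟨lam, fun i => rfl⟩)
  set H : Subgroup Fqˣ := MonoidHom.ker (powMonoidHom d : Fqˣ →* Fqˣ) with hH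
  have hmem : ∀ a : Fqˣ, a ∈ H ↔ a ^ d = 1 := fun a => Iff.rfl
  -- key equivalence of relations
  have hker : Setoid.ker f = QuotientGroup.leftRel H := by
    ext a b
    show f a = f b ↔ _
    rw [QuotientGroup.leftRel_apply, hmem]
    constructor
    · intro hab
      have h1 : ∀ i ∈ S, (a⁻¹ * b) ^ (w i) = 1 := by
        intro i hiS
        have hxi : x i ≠ 0 := by simpa [hS] using hiS
        have := congrFun hab i
        simp only [hf] at this
        have h2 : (algebraMap Fq K (a : Fq)) ^ (w i) = (algebraMap Fq K (b : Fq)) ^ (w i) :=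
          mul_right_cancel₀ hxi this
        have h3 : (a : Fq) ^ (w i) = (b : Fq) ^ (w i) := by
          apply hinj; simpa [map_pow] using h2
        have h4 : a ^ (w i) = b ^ (w i) := Units.ext (by push_cast; exact h3)
        rw [mul_pow, ← h4, inv_pow, inv_mul_cancel]
      have hdvd : orderOf (a⁻¹ * b) ∣ d :=
        Finset.dvd_gcd fun i hiS => orderOf_dvd_of_pow_eq_one (h1 i hiS)
      exact orderOf_dvd_iff_pow_eq_one.mp hdvd
    · intro hab
      funext i
      by_cases hxi : x i ∈ ({0} : Set K)
      · simp only [Set.mem_singleton_iff] at hxi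
        simp [hf, hxi]
      · simp only [Set.mem_singleton_iff] at hxi
        have hiS : i ∈ S := by simp [hS, hxi]
        have hwd : d ∣ w i := Finset.gcd_dvd hiS
        have h1 : (a⁻¹ * b) ^ (w i) = 1 := by
          obtain ⟨c, hc⟩ := hwd
          rw [hc, pow_mul, hab, one_pow]
        have h4 : a ^ (w i) = b ^ (w i) := by
          rw [mul_pow, inv_pow] at h1
          have := congrArg (fun t => a ^ (w i) * t) h1
          simpa [mul_assoc, ← mul_assoc, mul_inv_cancel] using this.symm
        have h3 : (a : Fq) ^ (w i) = (b : Fq) ^ (w i) := by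
          exact_mod_cast congrArg (Units.val) h4
        simp only [hf]
        rw [← map_pow, ← map_pow, h3]
  -- card of range f = card quotient
  have e2 : Nat.card (Set.range f) = Nat.card (Fqˣ ⧸ H) := by
    rw [← Nat.card_congr (Setoid.quotientKerEquivRange f)]
    congr 1
    show Quotient (Setoid.ker f) = Quotient (QuotientGroup.leftRel H)
    rw [hker]
  have hcardH : Nat.card H = Nat.gcd d (q - 1) := by
    have : Nat.card H = Nat.card {a : Fqˣ // a ^ d = 1} :=
      Nat.card_congr (Equiv.subtypeEquivRight fun a => hmem a)
    rw [this, aux_card_pow hdpos, Fintype.card_units, hcard]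
  have hcardG : Nat.card Fqˣ = q - 1 := by
    rw [Nat.card_eq_fintype_card, Fintype.card_units, hcard]
  have hquot : Nat.card (Fqˣ ⧸ H) = (q - 1) / Nat.gcd d (q - 1) := by
    have h1 : Nat.card H * Nat.card (Fqˣ ⧸ H) = Nat.card Fqˣ := Subgroup.card_mul_index H
    have h2 : 0 < Nat.card H := Nat.card_pos
    rw [hcardH, hcardG] at h1
    have h3 : 0 < Nat.gcd d (q - 1) := hcardH ▸ h2
    exact Nat.eq_div_of_mul_eq_right h3.ne' h1
  rw [Nat.card_congr e1, e2, hquot]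
end
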